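/- Let S be an inverse semigroup without zero element with |S/σ| ≥ 2, and let S⁰ be S with an external zero adjoined. Then: (i) gr(Γ(S⁰)) = 4 if and only if |S/σ| = 2 and each of the two σ-classes contains at least two elements of S; (ii) gr(Γ(S⁰)) = 3 if and only if |S/σ| ≥ 3. -/

import Mathlib

namespace ZDG

variable {S : Type*} [Semigroup S]

/-- The natural partial order on an inverse semigroup: `a ≤ b` iff `a = e * b`
for some idempotent `e`. -/
def nle (a b : S) : Prop := ∃ e : S, e * e = e ∧ a = e * b

/-- `omg a b` is the set `ω(a,b)` of common lower bounds of `a` and `b` with respect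
to the natural partial order. -/
def omg (a b : S) : Set S := {c | nle c a ∧ nle c b}

lemma omg_comm (a b : S) : omg a b = omg b a := by
  ext c; exact and_comm

/-- `Zx z` is the set `Z(S)×` of nonzero zero-divisors of `S` (with zero element `z`). -/
def Zx (z : S) : Set S := {a | a ≠ z ∧ ∃ b : S, b ≠ z ∧ omg a b = {z}}

/-- The zero-divisor graph `Γ(S)`: vertices are the elements of `Z(S)×`, and two
distinct vertices `a`, `b` are adjacent iff `ω(a,b) = {z}`. -/
def ZDGraph (z : S) : SimpleGraph (Zx z) where
  Adj a b := (a : S) ≠ (b : S) ∧ omg (a : S) (b : S) = {z}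
  symm := ⟨by
    rintro a b ⟨h1, h2⟩
    exact ⟨fun h => h1 h.symm, (omg_comm (b : S) (a : S)).trans h2⟩⟩
  loopless := ⟨by rintro a ⟨h1, -⟩; exact h1 rfl⟩

/-- The set of minimal elements of `S \ {z}` with respect to the natural partial order. -/
def MinOf (z : S) : Set S := {x | x ≠ z ∧ ∀ y : S, y ≠ z → nle y x → y = x}

/-- The annihilator of `x`: the set of `y` with `ω(x,y) = {z}`. -/
def Ann (z : S) (x : S) : Set S := {y | omg x y = {z}}

end ZDG

open ZDG

namespace ZDG

/-- The least group congruence `σ` on an inverse semigroup: `a σ b` iff `e*a = f*b`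
for some idempotents `e`, `f`. -/
def sigmaRel {S : Type*} [Semigroup S] (a b : S) : Prop :=
  ∃ e f : S, e * e = e ∧ f * f = f ∧ e * a = f * b

end ZDG

/-! ### Auxiliary graph lemmas -/

section GraphAux

open SimpleGraph

lemma egirth_le_of_cycle' {V : Type*} {G : SimpleGraph V} {a : V} {w : G.Walk a a}
    (hw : w.IsCycle) : G.egirth ≤ w.length :=
  iInf_le_of_le a (iInf_le_of_le w (iInf_le _ hw))

lemma triangle_cycle' {V : Type*} {G : SimpleGraph V} {u v w : V}
    (h1 : G.Adj u v) (h2 : G.Adj v w) (h3 : G.Adj u w) :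
    (Walk.cons h1 (Walk.cons h2 (Walk.cons h3.symm Walk.nil))).IsCycle := by
  simp [Walk.isCycle_def, Walk.isTrail_def, h1.ne, h2.ne, h3.ne, (h1.ne).symm,
    (h2.ne).symm, (h3.ne).symm, Sym2.eq_iff]

lemma square_cycle' {V : Type*} {G : SimpleGraph V} {a b c d : V}
    (h1 : G.Adj a b) (h2 : G.Adj b c) (h3 : G.Adj c d) (h4 : G.Adj d a)
    (hac : a ≠ c) (hbd : b ≠ d) :
    (Walk.cons h1 (Walk.cons h2 (Walk.cons h3 (Walk.cons h4 Walk.nil)))).IsCycle := by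
  simp [Walk.isCycle_def, Walk.isTrail_def, h1.ne, h2.ne, h3.ne, h4.ne,
    (h1.ne).symm, (h2.ne).symm, (h3.ne).symm, (h4.ne).symm, hac, hbd, hac.symm,
    hbd.symm, Sym2.eq_iff]

lemma walk_len_three' {V : Type*} {G : SimpleGraph V} {a : V} (w : G.Walk a a)
    (h : w.length = 3) : ∃ u v : V, G.Adj a u ∧ G.Adj u v ∧ G.Adj a v := by
  cases w with
  | nil => simp at h
  | cons h1 p =>
    cases p with
    | nil => simp at h
    | cons h2 q =>
      cases q with
      | nil => simp at h
      | cons h3 r =>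
        cases r with
        | nil => exact ⟨_, _, h1, h2, h3.symm⟩
        | cons h4 s => simp only [Walk.length_cons] at h; omega

lemma star_isAcyclic' {V : Type*} {G : SimpleGraph V} {c : V}
    (h : ∀ u v, G.Adj u v → u = c ∨ v = c) : G.IsAcyclic := by
  intro v w hc
  have h3l := hc.three_le_length
  cases w with
  | nil => simp at h3l
  | cons h1 p =>
    cases p with
    | nil => simp at h3l
    | cons h2 q =>
      cases q with
      | nil => simp only [Walk.length_cons, Walk.length_nil] at h3l; omega
      | cons h3 r =>
        have hnd := hc.2
        simp only [Walk.support_cons, List.tail_cons, List.nodup_cons] at hnd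
        have hvr := r.end_mem_support
        have hv3 := r.start_mem_support
        rcases h _ _ h2 with e1 | e2
        · rcases h _ _ h3 with e2' | e3
          · exact hnd.1 (by rw [e1, ← e2']; exact List.mem_cons_self)
          · exact hnd.1 (by rw [e1, ← e3]; exact List.mem_cons_of_mem _ hv3)
        · rcases h _ _ h1 with e0 | e1'
          · exact hnd.2.1 (by rw [e2, ← e0]; exact hvr)
          · exact hnd.1 (by rw [e1', ← e2]; exact List.mem_cons_self)

end GraphAux

/-! ### Auxiliary semigroup lemmas -/

namespace ZDG

variable {S : Type*} [Semigroup S]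

lemma sigma_refl' (hinv : ∀ a : S, ∃ b : S, a * b * a = a ∧ b * a * b = b) (a : S) :
    sigmaRel a a := by
  obtain ⟨b, hb, -⟩ := hinv a
  have he : (a * b) * (a * b) = a * b := by rw [← mul_assoc, hb]
  exact ⟨a * b, a * b, he, he, rfl⟩

lemma sigma_symm' {a b : S} (h : sigmaRel a b) : sigmaRel b a := by
  obtain ⟨e, f, he, hf, h⟩ := h; exact ⟨f, e, hf, he, h.symm⟩

lemma idem_mul' (hcomm : ∀ e f : S, e * e = e → f * f = f → e * f = f * e)
    {e f : S} (he : e * e = e) (hf : f * f = f) : (e * f) * (e * f) = e * f := by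
  calc (e * f) * (e * f) = e * (f * e) * f := by simp only [mul_assoc]
    _ = e * (e * f) * f := by rw [hcomm e f he hf]
    _ = (e * e) * (f * f) := by simp only [mul_assoc]
    _ = e * f := by rw [he, hf]

lemma sigma_trans' (hcomm : ∀ e f : S, e * e = e → f * f = f → e * f = f * e)
    {a b c : S} (h1 : sigmaRel a b) (h2 : sigmaRel b c) : sigmaRel a c := by
  obtain ⟨e, f, he, hf, h1⟩ := h1
  obtain ⟨g, h, hg, hh, h2⟩ := h2
  refine ⟨g * e, f * h, idem_mul' hcomm hg he, idem_mul' hcomm hf hh, ?_⟩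
  calc (g * e) * a = g * (e * a) := mul_assoc _ _ _
    _ = g * (f * b) := by rw [h1]
    _ = (g * f) * b := (mul_assoc _ _ _).symm
    _ = (f * g) * b := by rw [hcomm g f hg hf]
    _ = f * (g * b) := mul_assoc _ _ _
    _ = f * (h * c) := by rw [h2]
    _ = (f * h) * c := (mul_assoc _ _ _).symm

lemma omg_zero_iff' (a b : S) :
    omg (a : WithZero S) (b : WithZero S) = {0} ↔ ¬ sigmaRel a b := by
  constructor
  · intro h hs
    obtain ⟨e, f, he, hf, heq⟩ := hs
    have hmem : (↑(e * a) : WithZero S) ∈ omg (a : WithZero S) (b : WithZero S) := by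
      refine ⟨⟨(e : WithZero S), ?_, ?_⟩, ⟨(f : WithZero S), ?_, ?_⟩⟩
      · rw [← WithZero.coe_mul, he]
      · rw [← WithZero.coe_mul]
      · rw [← WithZero.coe_mul, hf]
      · rw [heq, ← WithZero.coe_mul]
    rw [h] at hmem
    exact WithZero.coe_ne_zero hmem
  · intro hs
    ext c
    simp only [Set.mem_singleton_iff]
    constructor
    · rintro ⟨⟨e, he, hce⟩, ⟨f, hf, hcf⟩⟩
      by_contra hc0
      have he0 : e ≠ 0 := by rintro rfl; exact hc0 (by simpa using hce)
      have hf0 : f ≠ 0 := by rintro rfl; exact hc0 (by simpa using hcf)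
      obtain ⟨e', rfl⟩ := WithZero.ne_zero_iff_exists.mp he0
      obtain ⟨f', rfl⟩ := WithZero.ne_zero_iff_exists.mp hf0
      refine hs ⟨e', f', ?_, ?_, ?_⟩
      · exact_mod_cast he
      · exact_mod_cast hf
      · have : ((e' * a : S) : WithZero S) = ((f' * b : S) : WithZero S) := by
          rw [WithZero.coe_mul, WithZero.coe_mul, ← hce, ← hcf]
        exact_mod_cast this
    · rintro rfl
      exact ⟨⟨0, by simp, by simp⟩, ⟨0, by simp, by simp⟩⟩

end ZDG

/-- if `|S/σ| ≥ 2`, then (i) `gr(Γ(S⁰)) = 4` iff `|S/σ| = 2` and both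
`σ`-classes have at least two elements; (ii) `gr(Γ(S⁰)) = 3` iff `|S/σ| ≥ 3`. -/
theorem stmt19 {S : Type*} [Semigroup S]
    (hinv : ∀ a : S, ∃ b : S, a * b * a = a ∧ b * a * b = b)
    (hcomm : ∀ e f : S, e * e = e → f * f = f → e * f = f * e)
    (hnz : ¬ ∃ z : S, ∀ x : S, z * x = z ∧ x * z = z)
    (hσ2 : ∃ a b : S, ¬ sigmaRel a b) :
    ((ZDGraph (0 : WithZero S)).egirth = 4 ↔
      ((∃ a b : S, ¬ sigmaRel a b ∧ ∀ c : S, sigmaRel c a ∨ sigmaRel c b) ∧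
        ∀ a : S, ∃ b : S, b ≠ a ∧ sigmaRel a b)) ∧
    ((ZDGraph (0 : WithZero S)).egirth = 3 ↔
      ∃ a b c : S, ¬ sigmaRel a b ∧ ¬ sigmaRel b c ∧ ¬ sigmaRel a c) := by
  classical
  have srefl : ∀ a : S, sigmaRel a a := sigma_refl' hinv
  have ssymm : ∀ {a b : S}, sigmaRel a b → sigmaRel b a := fun h => sigma_symm' h
  have strans : ∀ {a b c : S}, sigmaRel a b → sigmaRel b c → sigmaRel a c :=
    fun h1 h2 => sigma_trans' hcomm h1 h2
  have hvert : ∀ a : S, (↑a : WithZero S) ∈ Zx (0 : WithZero S) := by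
    intro a
    obtain ⟨x, y, hxy⟩ := hσ2
    have hex : ∃ b : S, ¬ sigmaRel a b := by
      by_cases h : sigmaRel a x
      · exact ⟨y, fun hay => hxy (strans (ssymm h) hay)⟩
      · exact ⟨x, h⟩
    obtain ⟨b, hb⟩ := hex
    exact ⟨WithZero.coe_ne_zero, ↑b, WithZero.coe_ne_zero, (omg_zero_iff' a b).mpr hb⟩
  set G := ZDGraph (0 : WithZero S) with hGdef
  let vt : S → ↥(Zx (0 : WithZero S)) := fun a => ⟨↑a, hvert a⟩
  have hadj : ∀ a b : S, G.Adj (vt a) (vt b) ↔ ¬ sigmaRel a b := by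
    intro a b
    constructor
    · rintro ⟨-, h⟩; exact (omg_zero_iff' a b).mp h
    · intro h
      refine ⟨?_, (omg_zero_iff' a b).mpr h⟩
      intro hab
      have : a = b := WithZero.coe_inj.mp hab
      exact h (this ▸ srefl a)
  have hlift : ∀ u : ↥(Zx (0 : WithZero S)), ∃ a : S, u = vt a := by
    intro u
    obtain ⟨a, ha⟩ := WithZero.ne_zero_iff_exists.mp u.2.1
    exact ⟨a, Subtype.ext ha.symm⟩
  -- girth 3 characterization
  have C3 : (∃ a b c : S, ¬ sigmaRel a b ∧ ¬ sigmaRel b c ∧ ¬ sigmaRel a c) →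
      G.egirth = 3 := by
    rintro ⟨a, b, c, hab, hbc, hac⟩
    refine le_antisymm ?_ SimpleGraph.three_le_egirth
    have := egirth_le_of_cycle'
      (triangle_cycle' ((hadj a b).mpr hab) ((hadj b c).mpr hbc) ((hadj a c).mpr hac))
    simpa using this
  have C3' : G.egirth = 3 →
      ∃ a b c : S, ¬ sigmaRel a b ∧ ¬ sigmaRel b c ∧ ¬ sigmaRel a c := by
    intro h
    have hac : ¬ G.IsAcyclic := by
      intro ha
      rw [SimpleGraph.IsAcyclic.egirth_eq_top ha] at h
      simp at h
    obtain ⟨x, w, hw, hl⟩ := SimpleGraph.exists_egirth_eq_length.mpr hac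
    rw [h] at hl
    have hl3 : w.length = 3 := by exact_mod_cast hl.symm
    obtain ⟨u, v, h1, h2, h3⟩ := walk_len_three' w hl3
    obtain ⟨a, rfl⟩ := hlift x
    obtain ⟨b, rfl⟩ := hlift u
    obtain ⟨c, rfl⟩ := hlift v
    exact ⟨a, b, c, (hadj _ _).mp h1, (hadj _ _).mp h2, (hadj _ _).mp h3⟩
  -- from no-triple to exactly two classes
  have htwo : (¬ ∃ a b c : S, ¬ sigmaRel a b ∧ ¬ sigmaRel b c ∧ ¬ sigmaRel a c) →
      ∃ p q : S, ¬ sigmaRel p q ∧ ∀ c : S, sigmaRel c p ∨ sigmaRel c q := by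
    intro hnt
    obtain ⟨p, q, hpq⟩ := hσ2
    refine ⟨p, q, hpq, fun c => ?_⟩
    by_contra h
    push_neg at h
    exact hnt ⟨p, q, c, hpq, fun hh => h.2 (ssymm hh), fun hh => h.1 (ssymm hh)⟩
  -- star case: acyclic
  have Cstar : (¬ ∃ a b c : S, ¬ sigmaRel a b ∧ ¬ sigmaRel b c ∧ ¬ sigmaRel a c) →
      (∃ a : S, ∀ b : S, sigmaRel a b → b = a) → G.egirth = ⊤ := by
    rintro hnt ⟨a, ha⟩
    rw [SimpleGraph.egirth_eq_top]
    apply star_isAcyclic' (c := vt a)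
    intro u v huv
    obtain ⟨x, rfl⟩ := hlift u
    obtain ⟨y, rfl⟩ := hlift v
    have hxy : ¬ sigmaRel x y := (hadj _ _).mp huv
    obtain ⟨p, q, hpq, hall⟩ := htwo hnt
    have key : ∀ r : S, sigmaRel a r ∨ sigmaRel r a →
        (vt x = vt a ∨ vt y = vt a) ∨ True := fun _ _ => Or.inr trivial
    rcases hall a with hap | haq
    · rcases hall x with hxp | hxq
      · exact Or.inl (congrArg vt (ha x (strans hap (ssymm hxp))))
      · rcases hall y with hyp | hyq
        · exact Or.inr (congrArg vt (ha y (strans hap (ssymm hyp))))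
        · exact absurd (strans hxq (ssymm hyq)) hxy
    · rcases hall x with hxp | hxq
      · rcases hall y with hyp | hyq
        · exact absurd (strans hxp (ssymm hyp)) hxy
        · exact Or.inr (congrArg vt (ha y (strans haq (ssymm hyq))))
      · exact Or.inl (congrArg vt (ha x (strans haq (ssymm hxq))))
  -- girth 4 (sufficiency)
  have C4 : (∃ a b : S, ¬ sigmaRel a b ∧ ∀ c : S, sigmaRel c a ∨ sigmaRel c b) →
      (∀ a : S, ∃ b : S, b ≠ a ∧ sigmaRel a b) → G.egirth = 4 := by
    rintro ⟨a, b, hab, hall⟩ hbig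
    have hnt : ¬ ∃ x y z : S, ¬ sigmaRel x y ∧ ¬ sigmaRel y z ∧ ¬ sigmaRel x z := by
      rintro ⟨x, y, z, hxy, hyz, hxz⟩
      rcases hall x with hx | hx <;> rcases hall y with hy | hy <;>
        rcases hall z with hz | hz
      all_goals first
        | exact hxy (strans hx (ssymm hy))
        | exact hyz (strans hy (ssymm hz))
        | exact hxz (strans hx (ssymm hz))
    have hne3 : G.egirth ≠ 3 := fun h => hnt (C3' h)
    obtain ⟨a', ha'ne, ha'⟩ := hbig a
    obtain ⟨b', hb'ne, hb'⟩ := hbig b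
    have A1 : ¬ sigmaRel a b := hab
    have A2 : ¬ sigmaRel b a' := fun h => hab (strans ha' (ssymm h))
    have A3 : ¬ sigmaRel a' b' := fun h => hab (strans ha' (strans h (ssymm hb')))
    have A4 : ¬ sigmaRel b' a := fun h => hab (ssymm (strans hb' h))
    have hvaa' : vt a ≠ vt a' := fun h =>
      ha'ne (WithZero.coe_inj.mp (congrArg Subtype.val h)).symm
    have hvbb' : vt b ≠ vt b' := fun h =>
      hb'ne (WithZero.coe_inj.mp (congrArg Subtype.val h)).symm
    have hle : G.egirth ≤ 4 := by
      have := egirth_le_of_cycle'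
        (square_cycle' ((hadj a b).mpr A1) ((hadj b a').mpr A2) ((hadj a' b').mpr A3)
          ((hadj b' a).mpr A4) hvaa' hvbb')
      simpa using this
    refine le_antisymm hle ?_
    have hlt : (3 : ℕ∞) < G.egirth :=
      lt_of_le_of_ne SimpleGraph.three_le_egirth (Ne.symm hne3)
    have h4 := (ENat.add_one_le_iff (by simp : (3 : ℕ∞) ≠ ⊤)).mpr hlt
    have h34 : (4 : ℕ∞) = 3 + 1 := by norm_num
    rw [h34]
    exact h4
  constructor
  · constructor
    · intro h4
      have hnt : ¬ ∃ a b c : S, ¬ sigmaRel a b ∧ ¬ sigmaRel b c ∧ ¬ sigmaRel a c := by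
        intro ht
        rw [C3 ht] at h4
        norm_num at h4
      refine ⟨htwo hnt, ?_⟩
      intro a
      by_contra hno
      push_neg at hno
      have hsing : ∀ b : S, sigmaRel a b → b = a := by
        intro b hb
        by_contra hne
        exact hno b hne hb
      rw [Cstar hnt ⟨a, hsing⟩] at h4
      simp at h4
    · rintro ⟨h1, h2⟩
      exact C4 h1 h2
  · exact ⟨C3', C3⟩
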